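/- For each n ∈ ℕ, the map f_n : Γ_{n+1} → Γ_n is 1-Lipschitz; that is, for all x, y ∈ 𝕊, d_n(f_n(x), f_n(y)) ≤ d_{n+1}(x,y). -/

import Mathlib

noncomputable section

instance : Fact ((0 : ℝ) < 1) := ⟨one_pos⟩

/-- The closed dyadic arc of level `n` and index `j` in the circle `𝕊 = [0,1]/{0,1}`,
realized as `AddCircle (1 : ℝ)`: the image of `[j/2^n, (j+1)/2^n]`. -/
def dyadicArc (n j : ℕ) : Set (AddCircle (1 : ℝ)) :=
  (fun r : ℝ => (r : AddCircle (1 : ℝ))) '' Set.Icc ((j : ℝ) / 2 ^ n) (((j : ℝ) + 1) / 2 ^ n)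

/-- The left endpoint of the dyadic arc of level `n` and index `j`. -/
def leftPt (n j : ℕ) : AddCircle (1 : ℝ) := (((j : ℝ) / 2 ^ n : ℝ) : AddCircle (1 : ℝ))

/-- The right endpoint of the dyadic arc of level `n` and index `j`. -/
def rightPt (n j : ℕ) : AddCircle (1 : ℝ) := ((((j : ℝ) + 1) / 2 ^ n : ℝ) : AddCircle (1 : ℝ))

/-- `Δ` (given as a function of the level `n` and the index `j < 2^n` of a dyadic arc) is a
dyadic diameter function of type `𝒮₁`: `Δ(𝕊) = 1`, `Δ` is positive, the two children of any
dyadic arc have equal `Δ`-value, which is either half of or equal to that of their parent,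
and `max {Δ(I) : I ∈ ℐ_n} → 0` as `n → ∞`. -/
def IsS1 (Δ : ℕ → ℕ → ℝ) : Prop :=
  Δ 0 0 = 1 ∧
  (∀ n j : ℕ, j < 2 ^ n → 0 < Δ n j) ∧
  (∀ n j : ℕ, j < 2 ^ n → Δ (n + 1) (2 * j) = Δ (n + 1) (2 * j + 1) ∧
    (Δ (n + 1) (2 * j) = Δ n j / 2 ∨ Δ (n + 1) (2 * j) = Δ n j)) ∧
  (∀ ε : ℝ, 0 < ε → ∃ N : ℕ, ∀ n ≥ N, ∀ j < 2 ^ n, Δ n j < ε)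

/-- `c` is a chain of dyadic arcs (given by level-index pairs) joining `x` to `y`:
all indices are valid, the union of the arcs is connected, and it contains `x` and `y`. -/
def IsDyadicChain (N : ℕ) (c : Fin (N + 1) → ℕ × ℕ) (x y : AddCircle (1 : ℝ)) : Prop :=
  (∀ k, (c k).2 < 2 ^ (c k).1) ∧
  IsConnected (⋃ k, dyadicArc (c k).1 (c k).2) ∧
  x ∈ ⋃ k, dyadicArc (c k).1 (c k).2 ∧ y ∈ ⋃ k, dyadicArc (c k).1 (c k).2

/-- The set of sums `Σ Δ'(J_k)` over all chains of dyadic arcs joining `x` and `y`. -/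
def chainSums (Δ' : ℕ → ℕ → ℝ) (x y : AddCircle (1 : ℝ)) : Set ℝ :=
  {s | ∃ (N : ℕ) (c : Fin (N + 1) → ℕ × ℕ), IsDyadicChain N c x y ∧
    s = ∑ k, Δ' (c k).1 (c k).2}

/-- The distance associated to a weight `Δ'` on dyadic arcs:
`d(x,y) = inf Σ Δ'(J_k)` over all chains of dyadic arcs joining `x` and `y`. -/
def dOf (Δ' : ℕ → ℕ → ℝ) (x y : AddCircle (1 : ℝ)) : ℝ := sInf (chainSums Δ' x y)

/-- The truncation `Δ_n` of `Δ`: `Δ_n(I) = Δ(I)` for arcs of level `≤ n`, and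
`Δ_n(I) = ½ Δ_n(parent of I)` for arcs of level `> n`. -/
def trunc (Δ : ℕ → ℕ → ℝ) (n : ℕ) : ℕ → ℕ → ℝ := fun m j =>
  if m ≤ n then Δ m j else Δ n (j / 2 ^ (m - n)) / 2 ^ (m - n)

/-- A chain of dyadic arcs is minimal if the arcs have pairwise disjoint interiors and no
union of at least two distinct arcs from the chain equals a dyadic arc. -/
def IsMinimalChain (N : ℕ) (c : Fin (N + 1) → ℕ × ℕ) : Prop :=
  (∀ k l : Fin (N + 1), k ≠ l →
    interior (dyadicArc (c k).1 (c k).2) ∩ interior (dyadicArc (c l).1 (c l).2) = ∅) ∧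
  (∀ T : Finset (Fin (N + 1)), 2 ≤ T.card →
    ¬∃ m j : ℕ, j < 2 ^ m ∧ (⋃ k ∈ T, dyadicArc (c k).1 (c k).2) = dyadicArc m j)

/-- The piecewise-linear folding of `[0,1]`: it maps `[0,1/4]` onto `[0,1/2]`,
`[1/4,3/8]` onto `[1/2,3/4]`, `[3/8,1/2]` onto `[1/2,3/4]` reversing orientation,
`[1/2,5/8]` onto `[1/4,1/2]` reversing orientation, `[5/8,3/4]` onto `[1/4,1/2]`,
and `[3/4,1]` onto `[1/2,1]`, each piece linearly. -/
def foldPhi (t : ℝ) : ℝ :=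
  if t ≤ 3 / 8 then 2 * t else if t ≤ 5 / 8 then 3 / 2 - 2 * t else 2 * t - 1

/-- The canonical representative in `[0,1)` of a point of the circle. -/
def circRep (x : AddCircle (1 : ℝ)) : ℝ := ((AddCircle.equivIco 1 0) x).1

/-- The map `f_n : 𝕊 → 𝕊`: on each dyadic arc `I` of level `n`, it is the identity if the
children of `I` have `Δ`-value half that of `I`, and the folding map of `I` if the children
have `Δ`-value equal to that of `I`. -/
def foldMap (Δ : ℕ → ℕ → ℝ) (n : ℕ) (x : AddCircle (1 : ℝ)) : AddCircle (1 : ℝ) :=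
  let t : ℝ := circRep x
  let j : ℕ := ⌊t * 2 ^ n⌋₊
  if Δ (n + 1) (2 * j) = Δ n j then
    (((((j : ℝ) + foldPhi (t * 2 ^ n - (j : ℝ))) / 2 ^ n) : ℝ) : AddCircle (1 : ℝ))
  else x

/-- The composition `F_{m,n} = f_m ∘ f_{m+1} ∘ ⋯ ∘ f_n` (the identity if `n < m`). -/
def Fchain (Δ : ℕ → ℕ → ℝ) (m : ℕ) : ℕ → AddCircle (1 : ℝ) → AddCircle (1 : ℝ)
  | 0 => if m = 0 then foldMap Δ 0 else id
  | n + 1 => if m ≤ n then Fchain Δ m n ∘ foldMap Δ (n + 1)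
      else if m = n + 1 then foldMap Δ (n + 1) else id

/-- The set `𝒟_k` of dyadic points of level `k` in the circle. -/
def Dpts (k : ℕ) : Set (AddCircle (1 : ℝ)) :=
  {x | ∃ j : ℕ, x = (((j : ℝ) / 2 ^ k : ℝ) : AddCircle (1 : ℝ))}

/-- The set `𝒟 = ⋃ k, 𝒟_k` of all dyadic points of the circle. -/
def DptsAll : Set (AddCircle (1 : ℝ)) := ⋃ k, Dpts k

/-- `F` is the map `F_m : Γ → Γ_m`: it is `1`-Lipschitz from `d_Δ` to `d_m` and agrees on
dyadic points with the (eventually stable) limit of the maps `F_{m,n}` as `n → ∞`. -/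
def IsLimitMap (Δ : ℕ → ℕ → ℝ) (m : ℕ) (F : AddCircle (1 : ℝ) → AddCircle (1 : ℝ)) : Prop :=
  (∀ x y : AddCircle (1 : ℝ), dOf (trunc Δ m) (F x) (F y) ≤ dOf Δ x y) ∧
  (∀ x ∈ DptsAll, ∃ N : ℕ, ∀ n ≥ N, Fchain Δ m n x = F x)

/-- A subset `U` of a space with a distance function `d` is `δ`-connected if every pair of
points of `U` is joined by a finite sequence of points of `U` with consecutive
distances at most `δ`. -/
def DConn {α : Type*} (d : α → α → ℝ) (δ : ℝ) (U : Set α) : Prop :=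
  ∀ x ∈ U, ∀ y ∈ U, ∃ (N : ℕ) (c : Fin (N + 1) → α),
    (∀ i, c i ∈ U) ∧ c 0 = x ∧ c (Fin.last N) = y ∧
      ∀ i : Fin N, d (c i.castSucc) (c i.succ) ≤ δ

/-- `U` is a `δ`-component of `S`: a maximal `δ`-connected subset of `S`. -/
def DComp {α : Type*} (d : α → α → ℝ) (δ : ℝ) (S U : Set α) : Prop :=
  U ⊆ S ∧ DConn d δ U ∧ ∀ V : Set α, U ⊆ V → V ⊆ S → DConn d δ V → V = U

/-- The diameter of a set with respect to a distance function `d`. -/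
def ddiam {α : Type*} (d : α → α → ℝ) (S : Set α) : ℝ :=
  sSup {r | ∃ x ∈ S, ∃ y ∈ S, r = d x y}

/-!
`f_n` maps every dyadic arc `J` into a dyadic arc `J'` with `Δ_n(J') ≤ Δ_{n+1}(J)`. If `l(J) ≤ n`,
or `J` lies in an arc `I ∈ ℐ_n` on which `f_n` is the identity, take `J' = J`: the weights agree,
resp. `Δ_n(J) = Δ(I)/2^(l(J)-n) ≤ Δ_{n+1}(J)` because the children of `I` carry at least `Δ(I)/2`.
If `I` is folded, each piece of the folding map is linear of slope `±2` with dyadic breaks, so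
`f_n(J)` lies in an arc `J' ⊆ I` of level `l(J) - 1`, and `Δ_n(J') = Δ(I)/2^(l(J)-1-n) = Δ_{n+1}(J)`
because the children of `I` carry `Δ(I)`. Mapping a chain arc by arc gives a chain from `f_n x` to
`f_n y`: a connected finite union of closed sets has a connected intersection graph, and
intersecting arcs have intersecting images. Its sum bounds `d_n(f_n x, f_n y)`.
-/

open Set Relation

theorem reflTransGen_inter_nonempty_of_isPreconnected_iUnion {X ι : Type*} [TopologicalSpace X]
    [Finite ι] {s : ι → Set X} (hcl : ∀ i, IsClosed (s i)) (hne : ∀ i, (s i).Nonempty)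
    (hs : IsPreconnected (⋃ i, s i)) (i j : ι) :
    ReflTransGen (fun i j => (s i ∩ s j).Nonempty) i j := by
  set R : ι → ι → Prop := fun i j => (s i ∩ s j).Nonempty
  have hstep : ∀ {k l z}, ReflTransGen R i k → z ∈ s k → z ∈ s l → ReflTransGen R i l :=
    fun hk hzk hzl => hk.tail ⟨_, hzk, hzl⟩
  have hsplit := (isPreconnected_iff_subset_of_fully_disjoint_closed
    (isClosed_iUnion_of_finite hcl)).mp hs (⋃ (k) (_ : ReflTransGen R i k), s k)
    (⋃ (k) (_ : ¬ReflTransGen R i k), s k)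
    (isClosed_iUnion_of_finite fun k => isClosed_iUnion_of_finite fun _ => hcl k)
    (isClosed_iUnion_of_finite fun k => isClosed_iUnion_of_finite fun _ => hcl k)
    (fun z hz => by
      obtain ⟨k, hzk⟩ := mem_iUnion.mp hz
      by_cases hk : ReflTransGen R i k
      exacts [Or.inl (mem_biUnion hk hzk), Or.inr (mem_biUnion hk hzk)])
    (disjoint_left.mpr fun z hzA hzB => by
      simp only [mem_iUnion] at hzA hzB
      obtain ⟨k, hk, hzk⟩ := hzA
      obtain ⟨l, hl, hzl⟩ := hzB
      exact hl (hstep hk hzk hzl))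
  obtain ⟨z, hz⟩ := hne j
  rcases hsplit with hA | hB
  · obtain ⟨k, hk, hzk⟩ := by simpa only [mem_iUnion] using hA (mem_iUnion_of_mem j hz)
    exact hstep hk hzk hz
  · obtain ⟨w, hw⟩ := hne i
    obtain ⟨k, hk, hwk⟩ := by simpa only [mem_iUnion] using hB (mem_iUnion_of_mem i hw)
    exact absurd (hstep ReflTransGen.refl hw hwk) hk

theorem IsConnected.iUnion_of_mapsTo {X Y ι : Type*} [TopologicalSpace X] [TopologicalSpace Y]
    [Finite ι] {s : ι → Set X} {t : ι → Set Y} {f : X → Y} (hcl : ∀ i, IsClosed (s i))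
    (hne : ∀ i, (s i).Nonempty) (hs : IsConnected (⋃ i, s i)) (ht : ∀ i, IsConnected (t i))
    (hf : ∀ i, MapsTo f (s i) (t i)) : IsConnected (⋃ i, t i) := by
  obtain ⟨i, -⟩ := nonempty_iUnion.mp hs.nonempty
  have : Nonempty ι := ⟨i⟩
  exact IsConnected.iUnion_of_reflTransGen ht fun i j =>
    ReflTransGen.mono (fun k l ⟨z, hzk, hzl⟩ => ⟨f z, hf k hzk, hf l hzl⟩) _ _
      (reflTransGen_inter_nonempty_of_isPreconnected_iUnion hcl hne hs.isPreconnected i j)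

theorem Icc_div_two_pow_subset_Icc {l p : ℕ} (hp : p < 2 ^ l) :
    Icc ((p : ℝ) / 2 ^ l) ((p + 1) / 2 ^ l) ⊆ Icc 0 1 := by
  have hp' : (p : ℝ) + 1 ≤ 2 ^ l := by exact_mod_cast hp
  exact Icc_subset_Icc (by positivity) ((div_le_one (by positivity)).mpr hp')

theorem two_pow_mul_add_lt_two_pow_add {n l i p : ℕ} (hi : i < 2 ^ n) (hp : p < 2 ^ l) :
    2 ^ l * i + p < 2 ^ (n + l) := by
  calc 2 ^ l * i + p < 2 ^ l * (i + 1) := by rw [mul_add_one]; omega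
    _ ≤ 2 ^ l * 2 ^ n := Nat.mul_le_mul_left _ hi
    _ = 2 ^ (n + l) := by rw [pow_add, mul_comm]

theorem two_pow_mul_add_div_two_pow {l i p : ℕ} (hp : p < 2 ^ l) : (2 ^ l * i + p) / 2 ^ l = i := by
  rw [Nat.mul_add_div (by positivity), Nat.div_eq_of_lt hp, add_zero]

theorem foldPhi_mem_Icc {t : ℝ} (ht : t ∈ Icc (0 : ℝ) 1) : foldPhi t ∈ Icc (0 : ℝ) 1 := by
  obtain ⟨h0, h1⟩ := ht
  unfold foldPhi
  split_ifs <;> constructor <;> linarith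

@[simp]
theorem foldPhi_zero : foldPhi 0 = 0 := by norm_num [foldPhi]

@[simp]
theorem foldPhi_one : foldPhi 1 = 1 := by norm_num [foldPhi]

theorem foldPhi_div_mul {E : ℝ} (hE : 0 < E) (T : ℝ) :
    foldPhi (T / (4 * E)) * (2 * E) =
      if T ≤ 3 / 2 * E then T else if T ≤ 5 / 2 * E then 3 * E - T else T - 2 * E := by
  have h4E : 0 < 4 * E := by positivity
  have hlo : T / (4 * E) ≤ 3 / 8 ↔ T ≤ 3 / 2 * E := by
    rw [div_le_iff₀ h4E]; constructor <;> intro <;> linarith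
  have hhi : T / (4 * E) ≤ 5 / 8 ↔ T ≤ 5 / 2 * E := by
    rw [div_le_iff₀ h4E]; constructor <;> intro <;> linarith
  simp only [foldPhi, hlo, hhi]
  split_ifs <;> field_simp <;> ring

theorem foldPhi_div_mul_mem_Icc {E P Q T : ℝ} (hE : 0 < E) (hT : T ∈ Icc P (P + 1))
    (hQ : (2 * P + 2 ≤ 3 * E ∧ Q = P) ∨
      (3 * E ≤ 2 * P + 1 ∧ 2 * P + 1 ≤ 5 * E ∧ Q = 3 * E - P - 1) ∨
      (5 * E ≤ 2 * P ∧ Q = P - 2 * E)) :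
    foldPhi (T / (4 * E)) * (2 * E) ∈ Icc Q (Q + 1) := by
  obtain ⟨hT0, hT1⟩ := hT
  rw [foldPhi_div_mul hE]
  split_ifs <;> rcases hQ with ⟨_, rfl⟩ | ⟨_, _, rfl⟩ | ⟨_, rfl⟩ <;> constructor <;> linarith

theorem foldPhi_mapsTo_Icc {k p : ℕ} (hp : p < 2 ^ (k + 1)) :
    ∃ q : ℕ, q < 2 ^ k ∧ MapsTo foldPhi (Icc (p / 2 ^ (k + 1)) ((p + 1) / 2 ^ (k + 1)))
      (Icc (q / 2 ^ k) ((q + 1) / 2 ^ k)) := by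
  rcases k with _ | k
  · refine ⟨0, by norm_num, fun t ht => ?_⟩
    simpa using foldPhi_mem_Icc (Icc_div_two_pow_subset_Icc hp ht)
  set E : ℕ := 2 ^ k with hE
  have hpE : p < 4 * E := by rw [pow_succ, pow_succ] at hp; omega
  have hE1 : 1 ≤ E := Nat.one_le_two_pow
  -- `q` is the index of the image of the arc under the piece `2t`, `3/2 - 2t` or `2t - 1`
  obtain ⟨q, hqE, hQ⟩ : ∃ q : ℕ, q < 2 * E ∧
      ((2 * p + 2 ≤ 3 * E ∧ q = p) ∨ (3 * E ≤ 2 * p + 1 ∧ 2 * p + 1 ≤ 5 * E ∧ q + p + 1 = 3 * E) ∨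
        (5 * E ≤ 2 * p ∧ q + 2 * E = p)) := by
    by_cases h₁ : 2 * p + 2 ≤ 3 * E
    · exact ⟨p, by omega, by omega⟩
    by_cases h₂ : 5 * E ≤ 2 * p
    · exact ⟨p - 2 * E, by omega, by omega⟩
    · exact ⟨3 * E - p - 1, by omega, by omega⟩
  have hQ' : (2 * (p : ℝ) + 2 ≤ 3 * E ∧ (q : ℝ) = p) ∨
      (3 * (E : ℝ) ≤ 2 * p + 1 ∧ 2 * (p : ℝ) + 1 ≤ 5 * E ∧ (q : ℝ) = 3 * E - p - 1) ∨
      (5 * (E : ℝ) ≤ 2 * p ∧ (q : ℝ) = p - 2 * E) := by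
    rcases hQ with ⟨h, h'⟩ | ⟨h, h', h''⟩ | ⟨h, h'⟩
    · exact Or.inl ⟨by exact_mod_cast h, by exact_mod_cast h'⟩
    · refine Or.inr (Or.inl ⟨by exact_mod_cast h, by exact_mod_cast h', ?_⟩)
      have : (q : ℝ) + p + 1 = 3 * E := by exact_mod_cast h''
      linarith
    · refine Or.inr (Or.inr ⟨by exact_mod_cast h, ?_⟩)
      have : (q : ℝ) + 2 * E = p := by exact_mod_cast h'
      linarith
  have h4E : (2 : ℝ) ^ (k + 1 + 1) = 4 * E := by rw [hE]; push_cast; ring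
  have h2E : (2 : ℝ) ^ (k + 1) = 2 * E := by rw [hE]; push_cast; ring
  refine ⟨q, by rw [pow_succ]; omega, fun t ht => ?_⟩
  have hE0 : (0 : ℝ) < E := by positivity
  rw [h4E, mem_Icc, div_le_iff₀ (by positivity), le_div_iff₀ (by positivity), ← mem_Icc] at ht
  have := foldPhi_div_mul_mem_Icc hE0 ht hQ'
  rwa [mul_div_cancel_right₀ _ (by positivity), mem_Icc, ← le_div_iff₀ (by positivity),
    ← div_le_iff₀ (by positivity), ← mem_Icc, ← h2E] at this

theorem dyadicArc_two_pow_mul_add (n l i p : ℕ) :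
    dyadicArc (n + l) (2 ^ l * i + p) =
      (fun s : ℝ => (((i + s) / 2 ^ n : ℝ) : AddCircle (1 : ℝ))) ''
        Icc (p / 2 ^ l) ((p + 1) / 2 ^ l) := by
  have hn : (0 : ℝ) < 2 ^ n := by positivity
  have hl : (0 : ℝ) < 2 ^ l := by positivity
  have hrescale : ∀ r : ℝ, r ∈ Icc (((2 ^ l * i + p : ℕ) : ℝ) / 2 ^ (n + l))
      (((2 ^ l * i + p : ℕ) + 1) / 2 ^ (n + l)) ↔
      r * 2 ^ n - i ∈ Icc ((p : ℝ) / 2 ^ l) ((p + 1) / 2 ^ l) := fun r => by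
    rw [pow_add]
    simp only [mem_Icc, div_le_iff₀ (mul_pos hn hl), le_div_iff₀ (mul_pos hn hl),
      div_le_iff₀ hl, le_div_iff₀ hl]
    push_cast
    constructor <;> rintro ⟨h1, h2⟩ <;> constructor <;> linarith
  ext x
  constructor
  · rintro ⟨r, hr, rfl⟩
    exact ⟨r * 2 ^ n - i, (hrescale r).mp hr, by
      simp only [add_sub_cancel, mul_div_cancel_right₀ _ hn.ne']⟩
  · rintro ⟨s, hs, rfl⟩
    refine ⟨(i + s) / 2 ^ n, (hrescale _).mpr ?_, rfl⟩
    convert hs using 1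
    field_simp
    ring

theorem dyadicArc_eq_image (n i : ℕ) :
    dyadicArc n i = (fun s : ℝ => (((i + s) / 2 ^ n : ℝ) : AddCircle (1 : ℝ))) '' Icc 0 1 := by
  simpa using dyadicArc_two_pow_mul_add n 0 i 0

theorem dyadicArc_eq_union (m j : ℕ) :
    dyadicArc m j = dyadicArc (m + 1) (2 * j) ∪ dyadicArc (m + 1) (2 * j + 1) := by
  have h₀ := dyadicArc_two_pow_mul_add m 1 j 0
  have h₁ := dyadicArc_two_pow_mul_add m 1 j 1
  norm_num at h₀ h₁
  rw [h₀, h₁, ← image_union, Icc_union_Icc_eq_Icc (by norm_num) (by norm_num),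
    dyadicArc_eq_image]

theorem isClosed_dyadicArc (m j : ℕ) : IsClosed (dyadicArc m j) :=
  (isCompact_Icc.image (AddCircle.continuous_mk' 1)).isClosed

theorem isConnected_dyadicArc (m j : ℕ) : IsConnected (dyadicArc m j) :=
  (isConnected_Icc (div_le_div_of_nonneg_right (by linarith) (by positivity))).image _
    (AddCircle.continuous_mk' 1).continuousOn

theorem coe_circRep (x : AddCircle (1 : ℝ)) : ((circRep x : ℝ) : AddCircle (1 : ℝ)) = x :=
  (AddCircle.equivIco 1 0).symm_apply_apply x

theorem circRep_coe (r : ℝ) : circRep (r : AddCircle (1 : ℝ)) = Int.fract r := by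
  simp [circRep, AddCircle.coe_equivIco_mk_apply]

theorem dyadicArc_zero_zero : dyadicArc 0 0 = univ := by
  refine eq_univ_of_forall fun x => ⟨circRep x, ?_, coe_circRep x⟩
  have := ((AddCircle.equivIco 1 0) x).2
  simp only [zero_add, mem_Ico] at this
  norm_num [circRep, this.1, this.2.le]

theorem foldMap_coe_natCast_div (Δ : ℕ → ℕ → ℝ) (n k : ℕ) :
    foldMap Δ n (((k : ℝ) / 2 ^ n : ℝ) : AddCircle (1 : ℝ)) = ((k : ℝ) / 2 ^ n : ℝ) := by
  have hrep : circRep (((k : ℝ) / 2 ^ n : ℝ) : AddCircle (1 : ℝ)) * 2 ^ n = (k % 2 ^ n : ℕ) := by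
    rw [circRep_coe, show (2 : ℝ) ^ n = ((2 ^ n : ℕ) : ℝ) by push_cast; rfl,
      Int.fract_div_natCast_eq_div_natCast_mod, div_mul_cancel₀ _ (by positivity)]
  simp only [foldMap, hrep, Nat.floor_natCast, sub_self, foldPhi_zero, add_zero]
  rw [← hrep, mul_div_cancel_right₀ _ (by positivity), coe_circRep, ite_self]

theorem foldMap_coe_add_div (Δ : ℕ → ℕ → ℝ) {n i : ℕ} (hi : i < 2 ^ n) {s : ℝ}
    (hs : s ∈ Icc (0 : ℝ) 1) :
    foldMap Δ n (((i + s) / 2 ^ n : ℝ) : AddCircle (1 : ℝ)) =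
      if Δ (n + 1) (2 * i) = Δ n i then (((i + foldPhi s) / 2 ^ n : ℝ) : AddCircle (1 : ℝ))
      else (((i + s) / 2 ^ n : ℝ) : AddCircle (1 : ℝ)) := by
  obtain ⟨hs0, hs1⟩ := hs
  -- at `s = 0, 1` the floor in `foldMap` may select a neighbouring arc, but both branches agree
  rcases hs0.eq_or_lt with rfl | hs0
  · rw [foldPhi_zero, ite_self, add_zero]
    exact foldMap_coe_natCast_div Δ n i
  rcases hs1.lt_or_eq with hs1 | rfl
  swap
  · rw [foldPhi_one, ite_self]
    exact_mod_cast foldMap_coe_natCast_div Δ n (i + 1)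
  have hn : (0 : ℝ) < 2 ^ n := by positivity
  have hrep : circRep (((i + s) / 2 ^ n : ℝ) : AddCircle (1 : ℝ)) = (i + s) / 2 ^ n := by
    have hi' : (i : ℝ) + 1 ≤ 2 ^ n := by exact_mod_cast hi
    rw [circRep_coe, Int.fract_eq_self, div_lt_one hn]
    exact ⟨by positivity, by linarith⟩
  have hfloor : ⌊(i : ℝ) + s⌋₊ = i := by
    rw [Nat.floor_eq_iff (by positivity)]
    exact ⟨by linarith, by linarith⟩
  simp only [foldMap, hrep, hfloor, div_mul_cancel₀ _ hn.ne', add_sub_cancel_left]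

theorem foldMap_mapsTo_dyadicArc_self (Δ : ℕ → ℕ → ℝ) {n i : ℕ} (hi : i < 2 ^ n) :
    MapsTo (foldMap Δ n) (dyadicArc n i) (dyadicArc n i) := by
  rw [dyadicArc_eq_image]
  rintro _ ⟨s, hs, rfl⟩
  rw [foldMap_coe_add_div Δ hi hs]
  split_ifs
  exacts [mem_image_of_mem _ (foldPhi_mem_Icc hs), mem_image_of_mem _ hs]

theorem foldMap_mapsTo_dyadicArc_of_le (Δ : ℕ → ℕ → ℝ) {n m j : ℕ} (hm : m ≤ n)
    (hj : j < 2 ^ m) : MapsTo (foldMap Δ n) (dyadicArc m j) (dyadicArc m j) := by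
  obtain ⟨l, rfl⟩ := Nat.exists_eq_add_of_le hm
  clear hm
  induction l generalizing m j with
  | zero => exact foldMap_mapsTo_dyadicArc_self Δ hj
  | succ l ih =>
    have hchild : ∀ b < 2, MapsTo (foldMap Δ (m + (l + 1))) (dyadicArc (m + 1) (2 * j + b))
        (dyadicArc m j) := fun b hb => by
      have := ih (m := m + 1) (j := 2 * j + b) (by rw [pow_succ]; omega)
      rw [show m + 1 + l = m + (l + 1) by omega] at this
      refine this.mono_right ?_
      rw [dyadicArc_eq_union m j]
      interval_cases b
      exacts [subset_union_left, subset_union_right]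
    have h := mapsTo_union.mpr ⟨hchild 0 (by norm_num), hchild 1 (by norm_num)⟩
    rwa [add_zero, ← dyadicArc_eq_union] at h

theorem IsS1.child_eq {Δ : ℕ → ℕ → ℝ} (hΔ : IsS1 Δ) {n i b : ℕ} (hi : i < 2 ^ n) (hb : b < 2) :
    Δ (n + 1) (2 * i + b) = Δ (n + 1) (2 * i) := by
  interval_cases b
  exacts [rfl, (hΔ.2.2.1 n i hi).1.symm]

theorem IsS1.half_le_child {Δ : ℕ → ℕ → ℝ} (hΔ : IsS1 Δ) {n i : ℕ} (hi : i < 2 ^ n) :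
    Δ n i / 2 ≤ Δ (n + 1) (2 * i) := by
  rcases (hΔ.2.2.1 n i hi).2 with h | h
  · exact h.ge
  · linarith [hΔ.2.1 n i hi]

theorem trunc_of_le (Δ : ℕ → ℕ → ℝ) {n m : ℕ} (hm : m ≤ n) (j : ℕ) : trunc Δ n m j = Δ m j :=
  if_pos hm

theorem trunc_add (Δ : ℕ → ℕ → ℝ) (n k j : ℕ) :
    trunc Δ n (n + k) j = Δ n (j / 2 ^ k) / 2 ^ k := by
  rcases k with _ | k <;> simp [trunc]

theorem trunc_nonneg {Δ : ℕ → ℕ → ℝ} (hΔ : IsS1 Δ) (n : ℕ) {m j : ℕ} (hj : j < 2 ^ m) :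
    0 ≤ trunc Δ n m j := by
  rcases le_total m n with hm | hm
  · rw [trunc_of_le Δ hm]
    exact (hΔ.2.1 m j hj).le
  · obtain ⟨k, rfl⟩ := Nat.exists_eq_add_of_le hm
    rw [trunc_add]
    refine div_nonneg (hΔ.2.1 n _ (Nat.div_lt_of_lt_mul ?_)).le (by positivity)
    rwa [← pow_add, add_comm]

theorem trunc_succ_two_pow_mul_add {Δ : ℕ → ℕ → ℝ} (hΔ : IsS1 Δ) {n k i p : ℕ} (hi : i < 2 ^ n)
    (hp : p < 2 ^ (k + 1)) :
    trunc Δ (n + 1) (n + (k + 1)) (2 ^ (k + 1) * i + p) = Δ (n + 1) (2 * i) / 2 ^ k := by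
  have hdiv : (2 ^ (k + 1) * i + p) / 2 ^ k = 2 * i + p / 2 ^ k := by
    rw [pow_succ, mul_assoc, Nat.mul_add_div (by positivity)]
  rw [show n + (k + 1) = n + 1 + k by omega, trunc_add, hdiv,
    hΔ.child_eq hi (Nat.div_lt_of_lt_mul (by rwa [← pow_succ]))]

theorem exists_mapsTo_foldMap_trunc_le_of_lt {Δ : ℕ → ℕ → ℝ} (hΔ : IsS1 Δ) {n k i p : ℕ}
    (hi : i < 2 ^ n) (hp : p < 2 ^ (k + 1)) :
    ∃ a : ℕ × ℕ, a.2 < 2 ^ a.1 ∧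
      MapsTo (foldMap Δ n) (dyadicArc (n + (k + 1)) (2 ^ (k + 1) * i + p)) (dyadicArc a.1 a.2) ∧
      trunc Δ n a.1 a.2 ≤ trunc Δ (n + 1) (n + (k + 1)) (2 ^ (k + 1) * i + p) := by
  rw [trunc_succ_two_pow_mul_add hΔ hi hp, dyadicArc_two_pow_mul_add]
  have hfoldMap : ∀ s ∈ Icc ((p : ℝ) / 2 ^ (k + 1)) ((p + 1) / 2 ^ (k + 1)), _ :=
    fun s hs => foldMap_coe_add_div Δ hi (Icc_div_two_pow_subset_Icc hp hs)
  by_cases hfold : Δ (n + 1) (2 * i) = Δ n i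
  · obtain ⟨q, hq, hφ⟩ := foldPhi_mapsTo_Icc hp
    refine ⟨(n + k, 2 ^ k * i + q), two_pow_mul_add_lt_two_pow_add hi hq, ?_, ?_⟩
    · rw [dyadicArc_two_pow_mul_add]
      rintro _ ⟨s, hs, rfl⟩
      rw [hfoldMap s hs, if_pos hfold]
      exact mem_image_of_mem _ (hφ hs)
    · rw [trunc_add, two_pow_mul_add_div_two_pow hq, hfold]
  · refine ⟨(n + (k + 1), 2 ^ (k + 1) * i + p), two_pow_mul_add_lt_two_pow_add hi hp, ?_, ?_⟩
    · rintro _ ⟨s, hs, rfl⟩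
      rw [hfoldMap s hs, if_neg hfold, dyadicArc_two_pow_mul_add]
      exact mem_image_of_mem _ hs
    · rw [trunc_add, two_pow_mul_add_div_two_pow hp, pow_succ', ← div_div]
      exact div_le_div_of_nonneg_right (hΔ.half_le_child hi) (by positivity)

theorem exists_mapsTo_foldMap_trunc_le {Δ : ℕ → ℕ → ℝ} (hΔ : IsS1 Δ) (n : ℕ) {m j : ℕ}
    (hj : j < 2 ^ m) :
    ∃ a : ℕ × ℕ, a.2 < 2 ^ a.1 ∧ MapsTo (foldMap Δ n) (dyadicArc m j) (dyadicArc a.1 a.2) ∧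
      trunc Δ n a.1 a.2 ≤ trunc Δ (n + 1) m j := by
  rcases le_or_gt m n with hm | hm
  · refine ⟨(m, j), hj, foldMap_mapsTo_dyadicArc_of_le Δ hm hj, ?_⟩
    rw [trunc_of_le Δ hm, trunc_of_le Δ (hm.trans n.le_succ)]
  obtain ⟨k, rfl⟩ := Nat.exists_eq_add_of_lt hm
  have hj' : j = 2 ^ (k + 1) * (j / 2 ^ (k + 1)) + j % 2 ^ (k + 1) := (Nat.div_add_mod _ _).symm
  rw [add_assoc, hj']
  refine exists_mapsTo_foldMap_trunc_le_of_lt hΔ (Nat.div_lt_of_lt_mul ?_)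
    (Nat.mod_lt _ (by positivity))
  rwa [← pow_add, add_comm, ← add_assoc]

theorem IsDyadicChain.map {N : ℕ} {c c' : Fin (N + 1) → ℕ × ℕ} {x y : AddCircle (1 : ℝ)}
    (hc : IsDyadicChain N c x y) {f : AddCircle (1 : ℝ) → AddCircle (1 : ℝ)}
    (hc' : ∀ k, (c' k).2 < 2 ^ (c' k).1)
    (hf : ∀ k, MapsTo f (dyadicArc (c k).1 (c k).2) (dyadicArc (c' k).1 (c' k).2)) :
    IsDyadicChain N c' (f x) (f y) := by
  obtain ⟨-, hconn, hx, hy⟩ := hc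
  obtain ⟨k, hxk⟩ := mem_iUnion.mp hx
  obtain ⟨l, hyl⟩ := mem_iUnion.mp hy
  exact ⟨hc', hconn.iUnion_of_mapsTo (fun _ => isClosed_dyadicArc _ _)
    (fun _ => (isConnected_dyadicArc _ _).nonempty) (fun _ => isConnected_dyadicArc _ _) hf,
    mem_iUnion_of_mem k (hf k hxk), mem_iUnion_of_mem l (hf l hyl)⟩

theorem chainSums_nonempty (Δ' : ℕ → ℕ → ℝ) (x y : AddCircle (1 : ℝ)) :
    (chainSums Δ' x y).Nonempty :=
  ⟨_, 0, fun _ => (0, 0), ⟨fun _ => by norm_num,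
    by rw [iUnion_const]; exact isConnected_dyadicArc 0 0,
    by simp [dyadicArc_zero_zero], by simp [dyadicArc_zero_zero]⟩, rfl⟩

theorem chainSums_trunc_bddBelow {Δ : ℕ → ℕ → ℝ} (hΔ : IsS1 Δ) (n : ℕ) (x y : AddCircle (1 : ℝ)) :
    BddBelow (chainSums (trunc Δ n) x y) := by
  refine ⟨0, ?_⟩
  rintro _ ⟨N, c, hc, rfl⟩
  exact Finset.sum_nonneg fun k _ => trunc_nonneg hΔ n (hc.1 k)

/-- For each `n`, the map `f_n : Γ_{n+1} → Γ_n` is `1`-Lipschitz: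
`d_n(f_n x, f_n y) ≤ d_{n+1}(x, y)` for all `x, y ∈ 𝕊`. -/
theorem foldMap_one_lipschitz (Δ : ℕ → ℕ → ℝ) (hΔ : IsS1 Δ) (n : ℕ)
    (x y : AddCircle (1 : ℝ)) :
    dOf (trunc Δ n) (foldMap Δ n x) (foldMap Δ n y) ≤ dOf (trunc Δ (n + 1)) x y := by
  refine le_csInf (chainSums_nonempty _ x y) ?_
  rintro _ ⟨N, c, hc, rfl⟩
  choose a ha hmaps hle using fun k => exists_mapsTo_foldMap_trunc_le hΔ n (hc.1 k)
  calc dOf (trunc Δ n) (foldMap Δ n x) (foldMap Δ n y)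
      ≤ ∑ k, trunc Δ n (a k).1 (a k).2 :=
        csInf_le (chainSums_trunc_bddBelow hΔ n _ _) ⟨N, a, hc.map ha hmaps, rfl⟩
    _ ≤ ∑ k, trunc Δ (n + 1) (c k).1 (c k).2 := Finset.sum_le_sum fun k _ => hle k
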